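/- Let b = [[1,0,0,0],[0,0,0,0],[0,0,0,0],[0,1,1,1]] (matrix b^(5)) and I the 2×2 identity, over ℂ(ξ_α,ξ_β,ξ_γ). With R_{βα} = −(I⊗I − ξ_α b)⁻¹(I⊗I − ξ_β b), the Yang–Baxter equation (R_{γβ}⊗I)(I⊗R_{γα})(R_{βα}⊗I) = (I⊗R_{βα})(R_{γα}⊗I)(I⊗R_{γβ}) holds. -/
import Mathlib


open Matrix

noncomputable section

/-- The field of rational functions in the three spectral parameters `ξ_α, ξ_β, ξ_γ`. -/
abbrev KK : Type := FractionRing (MvPolynomial (Fin 3) ℚ)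

/-- The spectral parameters `ξ 0 = ξ_α`, `ξ 1 = ξ_β`, `ξ 2 = ξ_γ` as elements of `KK`. -/
def xi (i : Fin 3) : KK := algebraMap (MvPolynomial (Fin 3) ℚ) KK (MvPolynomial.X i)

/-- Reindexing of a 4×4 matrix by pairs, lexicographically: 0↦11, 1↦12, 2↦21, 3↦22. -/
def toPairs (M : Matrix (Fin 4) (Fin 4) KK) :
    Matrix (Fin 2 × Fin 2) (Fin 2 × Fin 2) KK :=
  Matrix.reindex finProdFinEquiv.symm finProdFinEquiv.symm M

/-- The matrix `b^(5)` of Alimohammadi–Ahmadi. -/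
def bmat : Matrix (Fin 2 × Fin 2) (Fin 2 × Fin 2) KK :=
  toPairs !![1,0,0,0; 0,0,0,0; 0,0,0,0; 0,1,1,1]

/-- The scattering matrix `R_{βα} = −(I⊗I − ξ_α b)⁻¹ (I⊗I − ξ_β b)`
(here `1` is the 4×4 identity `I⊗I`). -/
def R (β α : Fin 3) : Matrix (Fin 2 × Fin 2) (Fin 2 × Fin 2) KK :=
  -((1 - xi α • bmat)⁻¹ * (1 - xi β • bmat))

/-- `A ⊗ I` acting on the first two tensor factors of `(ℂ²)^{⊗3}`. -/
def legL (A : Matrix (Fin 2 × Fin 2) (Fin 2 × Fin 2) KK) :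
    Matrix (Fin 2 × Fin 2 × Fin 2) (Fin 2 × Fin 2 × Fin 2) KK :=
  Matrix.of fun p q => A (p.1, p.2.1) (q.1, q.2.1) * (if p.2.2 = q.2.2 then 1 else 0)

/-- `I ⊗ A` acting on the last two tensor factors of `(ℂ²)^{⊗3}`. -/
def legR (A : Matrix (Fin 2 × Fin 2) (Fin 2 × Fin 2) KK) :
    Matrix (Fin 2 × Fin 2 × Fin 2) (Fin 2 × Fin 2 × Fin 2) KK :=
  Matrix.of fun p q => (if p.1 = q.1 then 1 else 0) * A (p.2.1, p.2.2) (q.2.1, q.2.2)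

/-! ### Auxiliary lemmas -/


lemma YB.den_ne (i : Fin 3) : (1 : KK) - xi i ≠ 0 := by
  have h : (1 : MvPolynomial (Fin 3) ℚ) - MvPolynomial.X i ≠ 0 := by
    intro h
    have := congrArg MvPolynomial.constantCoeff h
    simp [MvPolynomial.constantCoeff_X] at this
  have hinj := IsFractionRing.injective (MvPolynomial (Fin 3) ℚ) KK
  intro h0
  apply h
  apply hinj
  rw [map_sub, _root_.map_one, map_zero]
  exact h0

lemma YB.bmat_apply (i j k l : Fin 2) :
    bmat (i,j) (k,l) =
      if (i = 0 ∧ j = 0 ∧ k = 0 ∧ l = 0) ∨ (i = 1 ∧ j = 1 ∧ ¬(k = 0 ∧ l = 0)) then 1 else 0 := by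
  fin_cases i <;> fin_cases j <;> fin_cases k <;> fin_cases l <;>
    simp [bmat, toPairs, finProdFinEquiv, Fin.divNat, Fin.modNat,
      Matrix.vecHead, Matrix.vecTail]

lemma YB.bmat_sq : bmat * bmat = bmat := by
  ext ⟨i,j⟩ ⟨k,l⟩
  fin_cases i <;> fin_cases j <;> fin_cases k <;> fin_cases l <;>
    simp [bmat, toPairs, Matrix.mul_apply, Fintype.sum_prod_type, Fin.sum_univ_two,
      finProdFinEquiv, Fin.divNat, Fin.modNat, Matrix.vecHead, Matrix.vecTail]

lemma YB.aff_mul (x y : KK) :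
    (1 + x • bmat) * (1 + y • bmat) = 1 + (x + y + x * y) • bmat := by
  simp only [mul_add, add_mul, mul_one, one_mul, Matrix.smul_mul, Matrix.mul_smul,
    smul_smul, YB.bmat_sq, add_smul]
  rw [mul_comm y x]
  abel

lemma YB.R_form (β α : Fin 3) :
    R β α = -(1 + ((xi α - xi β) / (1 - xi α)) • bmat) := by
  have hα := YB.den_ne α
  have h1 : (1 : Matrix (Fin 2 × Fin 2) (Fin 2 × Fin 2) KK) - xi α • bmat
      = 1 + (-(xi α)) • bmat := by rw [sub_eq_add_neg, neg_smul]
  have h2 : (1 : Matrix (Fin 2 × Fin 2) (Fin 2 × Fin 2) KK) - xi β • bmat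
      = 1 + (-(xi β)) • bmat := by rw [sub_eq_add_neg, neg_smul]
  have hinv : (1 - xi α • bmat)⁻¹ = 1 + (xi α / (1 - xi α)) • bmat := by
    apply Matrix.inv_eq_right_inv
    rw [h1, YB.aff_mul]
    have h0 : -xi α + xi α / (1 - xi α) + -xi α * (xi α / (1 - xi α)) = 0 := by
      field_simp
      ring
    rw [h0]
    simp
  rw [R, hinv, h2, YB.aff_mul]
  have h0 : xi α / (1 - xi α) + -xi β + xi α / (1 - xi α) * -xi β
      = (xi α - xi β) / (1 - xi α) := by
    field_simp
    ring
  rw [h0]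

lemma YB.legL_aff (c : KK) : legL (-(1 + c • bmat)) = -(1 + c • legL bmat) := by
  ext ⟨i,j,k⟩ ⟨l,m,n⟩
  simp only [legL, Matrix.of_apply, Matrix.neg_apply, Matrix.add_apply, Matrix.smul_apply,
    Matrix.one_apply, smul_eq_mul, Prod.mk.injEq, Prod.ext_iff]
  by_cases h1 : i = l <;> by_cases h2 : j = m <;> by_cases h3 : k = n <;>
    simp [h1, h2, h3]

lemma YB.legR_aff (c : KK) : legR (-(1 + c • bmat)) = -(1 + c • legR bmat) := by
  ext ⟨i,j,k⟩ ⟨l,m,n⟩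
  simp only [legR, Matrix.of_apply, Matrix.neg_apply, Matrix.add_apply, Matrix.smul_apply,
    Matrix.one_apply, smul_eq_mul, Prod.mk.injEq, Prod.ext_iff]
  by_cases h1 : i = l <;> by_cases h2 : j = m <;> by_cases h3 : k = n <;>
    simp [h1, h2, h3]

set_option maxHeartbeats 2000000 in
lemma YB.braid : legL bmat * legR bmat * legL bmat = legR bmat * legL bmat * legR bmat := by
  ext ⟨i,j,k⟩ ⟨l,m,n⟩
  fin_cases i <;> fin_cases j <;> fin_cases k <;> fin_cases l <;> fin_cases m <;> fin_cases n <;>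
    simp (config := { decide := true }) [legL, legR, Matrix.mul_apply,
      Fintype.sum_prod_type, Fin.sum_univ_two, YB.bmat_apply,
      -Prod.mk_zero_zero, -Prod.mk_one_one, Finset.filter_eq, Finset.filter_eq']

lemma YB.legL_mul (A B : Matrix (Fin 2 × Fin 2) (Fin 2 × Fin 2) KK) :
    legL A * legL B = legL (A * B) := by
  ext ⟨i,j,k⟩ ⟨l,m,n⟩
  simp only [legL, Matrix.mul_apply, Matrix.of_apply, Fintype.sum_prod_type, Fin.sum_univ_two]
  fin_cases k <;> fin_cases n <;> simp

lemma YB.legR_mul (A B : Matrix (Fin 2 × Fin 2) (Fin 2 × Fin 2) KK) :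
    legR A * legR B = legR (A * B) := by
  ext ⟨i,j,k⟩ ⟨l,m,n⟩
  simp only [legR, Matrix.mul_apply, Matrix.of_apply, Fintype.sum_prod_type, Fin.sum_univ_two]
  fin_cases i <;> fin_cases l <;> simp

set_option maxHeartbeats 1000000 in
lemma YB.mul3 (x y z : KK) (P Q : Matrix (Fin 2 × Fin 2 × Fin 2) (Fin 2 × Fin 2 × Fin 2) KK)
    (hP : P * P = P) :
    (1 + x • P) * (1 + y • Q) * (1 + z • P)
      = 1 + (x + z + z * x) • P + y • Q + (y * x) • (P * Q) + (z * y) • (Q * P)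
        + (z * (y * x)) • (P * Q * P) := by
  simp only [mul_add, add_mul, mul_one, one_mul, Matrix.smul_mul, Matrix.mul_smul,
    smul_smul, hP, add_smul]
  abel

/-- The Yang–Baxter equation for this interaction matrix:
`(R_{γβ} ⊗ I)(I ⊗ R_{γα})(R_{βα} ⊗ I) = (I ⊗ R_{βα})(R_{γα} ⊗ I)(I ⊗ R_{γβ})`
with `α = 0`, `β = 1`, `γ = 2`. -/
theorem yang_baxter_b5 :
    legL (R 2 1) * legR (R 2 0) * legL (R 1 0) =
      legR (R 1 0) * legL (R 2 0) * legR (R 2 1) := by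
  have hα := YB.den_ne 0
  have hβ := YB.den_ne 1
  set B1 := legL bmat with hB1
  set B2 := legR bmat with hB2
  set c1 : KK := (xi 1 - xi 2) / (1 - xi 1) with hc1
  set c2 : KK := (xi 0 - xi 2) / (1 - xi 0) with hc2
  set c3 : KK := (xi 0 - xi 1) / (1 - xi 0) with hc3
  have hB1sq : B1 * B1 = B1 := by rw [hB1, YB.legL_mul, YB.bmat_sq]
  have hB2sq : B2 * B2 = B2 := by rw [hB2, YB.legR_mul, YB.bmat_sq]
  rw [YB.R_form 2 1, YB.R_form 2 0, YB.R_form 1 0,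
    YB.legL_aff, YB.legR_aff, YB.legL_aff, YB.legR_aff, YB.legL_aff, YB.legR_aff]
  simp only [neg_mul, mul_neg, neg_neg, ← hc1, ← hc2, ← hc3, ← hB1, ← hB2]
  rw [neg_inj, YB.mul3 c1 c2 c3 B1 B2 hB1sq, YB.mul3 c3 c2 c1 B2 B1 hB2sq]
  rw [show B1 * B2 * B1 = B2 * B1 * B2 from YB.braid]
  have e1 : c1 + c3 + c3 * c1 = c2 := by rw [hc1, hc2, hc3]; field_simp; ring
  have e2 : c3 + c1 + c1 * c3 = c2 := by rw [← e1]; ring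
  rw [e1, e2, show c3 * (c2 * c1) = c1 * (c2 * c3) from by ring,
    show c2 * c1 = c1 * c2 from mul_comm _ _,
    show c3 * c2 = c2 * c3 from mul_comm _ _]
  abel

end
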